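/- Let p ∈ A be a monic irreducible polynomial of degree d_p, and let O_{E,(p)} denote the localization of O_E at the multiplicative set A∖(p). Then for every n ≥ 0, p^{⌊n/d_p⌋}·l_n ∈ O_{E,(p)}, where l_n are the logarithm coefficients of the Drinfeld module ρ. -/

import Mathlib

/-!
Since `X ^ q ^ m - X` is squarefree and divisible by the irreducible `p` exactly when
`deg p ∣ m`, the factor `θ - θ ^ q ^ m` that the recurrence divides by is `p` times a unit
of `O_{E,(p)}` when `deg p ∣ m` and a unit otherwise. So, by strong induction on `n`, passing
from `l_{n-l}` to `l_n` costs at most one power of `p`, and only when `⌊n / deg p⌋` jumps.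
-/

noncomputable section

open Polynomial

variable (Fq : Type) [Field Fq] [Fintype Fq]
variable (E : Type) [Field E] [Algebra (RatFunc Fq) E]
  [FiniteDimensional (RatFunc Fq) E] [Algebra.IsSeparable (RatFunc Fq) E]

/-- The `A = Fq[θ]`-algebra structure on `E`, through `K = Fq(θ)`. -/
local instance instAE : Algebra (Polynomial Fq) E :=
  ((algebraMap (RatFunc Fq) E).comp (algebraMap (Polynomial Fq) (RatFunc Fq))).toAlgebra

/-- `θ` as an element of `E`. -/
def thetaE : E := algebraMap (RatFunc Fq) E RatFunc.X

/-- The logarithm coefficients `l_n ∈ E` of the Drinfeld module with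
`ρ_θ = θ + a_1 τ + ⋯ + a_r τ^r`:  `l_0 = 1`, `l_j = 0` for `j < 0`, and
`(θ - θ^{q^n}) l_n = ∑_{l=1}^{r} l_{n-l} a_l^{q^{n-l}}` for `n ≥ 1`. -/
def lCoeff (r : ℕ) (a : ℕ → integralClosure (Polynomial Fq) E) : ℕ → E
  | 0 => 1
  | (n + 1) =>
      (thetaE Fq E - thetaE Fq E ^ (Fintype.card Fq) ^ (n + 1))⁻¹ *
        ∑ l ∈ Finset.Icc 1 r,
          if h : 1 ≤ l ∧ l ≤ n + 1 then
            lCoeff r a (n + 1 - l) * (a l : E) ^ (Fintype.card Fq) ^ (n + 1 - l)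
          else 0
  decreasing_by omega

/-- `x ∈ O_{E,(p)}`: there are `u ∈ O_E` and `b ∈ A` with `p ∤ b` and `b·x = u`. -/
def MemLocOE (p : Polynomial Fq) (x : E) : Prop :=
  ∃ (u : integralClosure (Polynomial Fq) E) (b : Polynomial Fq), ¬ p ∣ b ∧
    algebraMap (Polynomial Fq) E b * x = (u : E)

theorem Polynomial.squarefree_X_pow_card_pow_sub_X {K : Type*} [Field K] [Fintype K] {m : ℕ}
    (hm : m ≠ 0) : Squarefree (X ^ Fintype.card K ^ m - X : K[X]) := by
  obtain ⟨c, hc⟩ := CharP.exists K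
  have hcard : c ∣ Fintype.card K :=
    (CharP.cast_eq_zero_iff K c _).mp (FiniteField.cast_card_eq_zero K)
  exact (galois_poly_separable c _ (dvd_pow hcard hm)).squarefree

theorem Irreducible.exists_X_pow_card_pow_sub_X_eq_pow_mul {K : Type*} [Field K] [Fintype K]
    {f : K[X]} (hf : Irreducible f) {m : ℕ} (hm : m ≠ 0) :
    ∃ g, ¬ f ∣ g ∧
      X ^ Fintype.card K ^ m - X = f ^ (if f.natDegree ∣ m then 1 else 0) * g := by
  have hdvd_iff := hf.natDegree_dvd_iff_dvd_X_pow_card_pow_sub_X (n := m)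
  rw [Nat.card_eq_fintype_card] at hdvd_iff
  split_ifs with hdeg
  · obtain ⟨g, hg⟩ := hdvd_iff.mp hdeg
    refine ⟨g, fun ⟨h, hh⟩ => hf.not_isUnit ?_, by rw [hg, pow_one]⟩
    exact squarefree_X_pow_card_pow_sub_X hm f ⟨h, by rw [hg, hh, mul_assoc]⟩
  · exact ⟨_, mt hdvd_iff.mpr hdeg, (one_mul _).symm⟩

namespace Subalgebra

variable {A E : Type*} [CommRing A] [CommRing E] [Algebra A E]

def localizedAt (S : Subalgebra A E) (M : Submonoid A) : Subalgebra A E where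
  carrier := {x | ∃ b ∈ M, algebraMap A E b * x ∈ S}
  mul_mem' := by
    rintro x y ⟨b, hb, hbx⟩ ⟨c, hc, hcy⟩
    refine ⟨b * c, M.mul_mem hb hc, ?_⟩
    convert S.mul_mem hbx hcy using 1
    rw [map_mul]; ring
  add_mem' := by
    rintro x y ⟨b, hb, hbx⟩ ⟨c, hc, hcy⟩
    refine ⟨b * c, M.mul_mem hb hc, ?_⟩
    convert S.add_mem (S.smul_mem hbx c) (S.smul_mem hcy b) using 1
    simp only [Algebra.smul_def, map_mul]; ring
  algebraMap_mem' c := ⟨1, M.one_mem, by simp⟩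

variable {S : Subalgebra A E} {M : Submonoid A}

theorem mem_localizedAt {x : E} : x ∈ S.localizedAt M ↔ ∃ b ∈ M, algebraMap A E b * x ∈ S :=
  Iff.rfl

theorem le_localizedAt : S ≤ S.localizedAt M :=
  fun x hx => ⟨1, M.one_mem, by simpa using hx⟩

theorem inv_algebraMap_mem_localizedAt {E : Type*} [Field E] [Algebra A E]
    {S : Subalgebra A E} {b : A} (hb : b ∈ M) : (algebraMap A E b)⁻¹ ∈ S.localizedAt M := by
  rcases eq_or_ne (algebraMap A E b) 0 with h | h
  · rw [h, inv_zero]; exact zero_mem _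
  · exact ⟨b, hb, by rw [mul_inv_cancel₀ h]; exact S.one_mem⟩

end Subalgebra

section

variable {K L : Type} [Field K] [Field L] [Algebra (RatFunc K) L]

theorem algebraMap_polynomial_injective : Function.Injective (algebraMap K[X] L) :=
  (algebraMap (RatFunc K) L).injective.comp (RatFunc.algebraMap_injective K)

theorem algebraMap_X_eq_thetaE : algebraMap K[X] L X = thetaE K L := by
  rw [thetaE, ← RatFunc.algebraMap_X]
  rfl

theorem memLocOE_iff {p : K[X]} [(Ideal.span {p}).IsPrime] {x : L} :
    MemLocOE K L p x ↔ x ∈ (integralClosure K[X] L).localizedAt (Ideal.span {p}).primeCompl := by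
  simp only [MemLocOE, Subalgebra.mem_localizedAt, Ideal.mem_primeCompl_iff,
    Ideal.mem_span_singleton]
  constructor
  · rintro ⟨u, b, hb, hbx⟩
    exact ⟨b, hb, hbx ▸ u.2⟩
  · rintro ⟨b, hb, hbx⟩
    exact ⟨⟨_, hbx⟩, b, hb, rfl⟩

variable [Fintype K]

theorem thetaE_sub_thetaE_pow (m : ℕ) :
    thetaE K L - thetaE K L ^ Fintype.card K ^ m =
      -algebraMap K[X] L (X ^ Fintype.card K ^ m - X) := by
  rw [map_sub, map_pow, algebraMap_X_eq_thetaE, neg_sub]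

theorem thetaE_sub_mul_lCoeff_succ (r : ℕ) (a : ℕ → integralClosure K[X] L) (n : ℕ) :
    (thetaE K L - thetaE K L ^ Fintype.card K ^ (n + 1)) * lCoeff K L r a (n + 1) =
      ∑ l ∈ Finset.Icc 1 r, if l ≤ n + 1 then
        lCoeff K L r a (n + 1 - l) * (a l : L) ^ Fintype.card K ^ (n + 1 - l) else 0 := by
  have hne : thetaE K L - thetaE K L ^ Fintype.card K ^ (n + 1) ≠ 0 := by
    rw [thetaE_sub_thetaE_pow, neg_ne_zero, map_ne_zero_iff _ algebraMap_polynomial_injective]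
    exact FiniteField.X_pow_card_pow_sub_X_ne_zero K n.succ_ne_zero Fintype.one_lt_card
  rw [lCoeff, ← mul_assoc, mul_inv_cancel₀ hne, one_mul]
  refine Finset.sum_congr rfl fun l hl => ?_
  simp [(Finset.mem_Icc.mp hl).1]

theorem algebraMap_pow_div_natDegree_mul_lCoeff_mem {O : Subalgebra K[X] L} (r : ℕ)
    {a : ℕ → integralClosure K[X] L} (ha : ∀ l, (a l : L) ∈ O) {p : K[X]} (hp : Irreducible p)
    (hinv : ∀ g, ¬ p ∣ g → (algebraMap K[X] L g)⁻¹ ∈ O) (n : ℕ) :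
    algebraMap K[X] L (p ^ (n / p.natDegree)) * lCoeff K L r a n ∈ O := by
  induction n using Nat.strong_induction_on with
  | _ n ih =>
  cases n with
  | zero => simp [lCoeff]
  | succ n =>
    obtain ⟨g, hg, hfac⟩ := hp.exists_X_pow_card_pow_sub_X_eq_pow_mul n.succ_ne_zero
    have hstep : algebraMap K[X] L (p ^ ((n + 1) / p.natDegree)) * lCoeff K L r a (n + 1) =
        -(algebraMap K[X] L g)⁻¹ * (algebraMap K[X] L (p ^ (n / p.natDegree)) *
          ((thetaE K L - thetaE K L ^ Fintype.card K ^ (n + 1)) * lCoeff K L r a (n + 1))) := by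
      have hg0 : algebraMap K[X] L g ≠ 0 := (map_ne_zero_iff _ algebraMap_polynomial_injective).mpr
        (by rintro rfl; exact hg (dvd_zero p))
      rw [thetaE_sub_thetaE_pow, hfac, Nat.succ_div, pow_add, map_mul, map_mul]
      field_simp
    rw [hstep, thetaE_sub_mul_lCoeff_succ, Finset.mul_sum]
    refine O.mul_mem (O.neg_mem (hinv g hg)) (O.sum_mem fun l hl => ?_)
    split_ifs with hln
    · have hl : 1 ≤ l := (Finset.mem_Icc.mp hl).1
      have hdiv : (n + 1 - l) / p.natDegree ≤ n / p.natDegree := Nat.div_le_div_right (by omega)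
      rw [← pow_sub_mul_pow p hdiv, map_mul]
      convert O.mul_mem
        (O.mul_mem (O.algebraMap_mem (p ^ (n / p.natDegree - (n + 1 - l) / p.natDegree)))
          (ih (n + 1 - l) (by omega)))
        (O.pow_mem (ha l) (Fintype.card K ^ (n + 1 - l))) using 1
      ring
    · simp

end

theorem log_coeff_integrality
    (r : ℕ) (a : ℕ → integralClosure (Polynomial Fq) E)
    (p : Polynomial Fq) (hp : Irreducible p) (n : ℕ) :
    MemLocOE Fq E p
      (algebraMap (Polynomial Fq) E (p ^ (n / p.natDegree)) * lCoeff Fq E r a n) := by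
  have := (Ideal.span_singleton_prime hp.ne_zero).mpr hp.prime
  rw [memLocOE_iff]
  refine algebraMap_pow_div_natDegree_mul_lCoeff_mem r
    (fun l => Subalgebra.le_localizedAt (a l).2) hp (fun g hg => ?_) n
  exact Subalgebra.inv_algebraMap_mem_localizedAt
    (Ideal.mem_primeCompl_iff.mpr (mt Ideal.mem_span_singleton.mp hg))

end
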